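/- arXiv:2105.08848 — 7 statements merged into one kernel-verified Lean document; each statement's English description precedes it below -/
import Mathlib

section
/- Fix γ < 0, σ ≠ 0, and real numbers r, b, and let θ = (b−r)/σ and ρ = (1−γ)/γ. The function F(ν) = −((1+ρ)/2)(θ + ν/σ)² + δ(ν) (which equals (1/(2|γ|))(θ + ν/σ)² + δ(ν)) has a unique global minimizer ν* over ℝ, given by: ν* = r − b if r − b ≤ 0; ν* = 0 if 0 < r − b ≤ σ²|γ|; and ν* = r − b − σ²|γ| if r − b > σ²|γ|. Consequently, (r − b − ν*)/(σ²|γ|) = min(1, max(0, (r − b)/(σ²|γ|))). -/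
lemma aux_min (m k : ℝ) (hk : 0 < k) (ν : ℝ) :
    let νs : ℝ := if m ≤ 0 then m else if m ≤ k then 0 else m - k
    (νs - m)^2 + 2*k*max νs 0 ≤ (ν - m)^2 + 2*k*max ν 0 := by
  intro νs
  have hmax : max ν 0 = ν ∨ max ν 0 = 0 := max_choice ν 0
  have h1 : 0 ≤ max ν 0 := le_max_right ν 0
  have h2 : ν ≤ max ν 0 := le_max_left ν 0
  unfold νs
  split_ifs with hm hmk
  · rw [max_eq_right hm]
    nlinarith [sq_nonneg (ν - m)]
  · push_neg at hm
    rw [max_eq_right le_rfl]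
    rcases hmax with h | h <;> rw [h] <;> nlinarith [sq_nonneg ν, sq_nonneg (ν - m)]
  · push_neg at hm hmk
    rw [max_eq_left (by linarith)]
    rcases hmax with h | h <;> rw [h] <;> nlinarith [sq_nonneg (ν - (m - k)), sq_nonneg (ν - m)]

lemma aux_uniq (m k : ℝ) (hk : 0 < k) (ν : ℝ) :
    let νs : ℝ := if m ≤ 0 then m else if m ≤ k then 0 else m - k
    (ν - m)^2 + 2*k*max ν 0 = (νs - m)^2 + 2*k*max νs 0 → ν = νs := by
  intro νs h
  have h1 : 0 ≤ max ν 0 := le_max_right ν 0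
  have h2 : ν ≤ max ν 0 := le_max_left ν 0
  have hmax : max ν 0 = ν ∨ max ν 0 = 0 := max_choice ν 0
  unfold νs at h ⊢
  split_ifs at h ⊢ with hm hmk
  · rw [max_eq_right hm] at h
    have hsq : (ν - m)^2 ≤ 0 := by nlinarith
    have := sq_nonneg (ν - m)
    have : (ν - m)^2 = 0 := le_antisymm hsq this
    have := pow_eq_zero_iff (n := 2) (by norm_num) |>.mp this
    linarith [this]
  · push_neg at hm
    rw [max_eq_right le_rfl] at h
    rcases hmax with hx | hx <;> rw [hx] at h
    · -- ν = max ν 0 ≥ 0, ν > 0 case effectively; equation: ν² + 2ν(k-m) = 0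
      have hν : 0 ≤ ν := hx ▸ h1
      nlinarith
    · -- ν ≤ 0: (ν-m)² = m² → ν(ν-2m)=0, ν ≤ 0 < 2m
      have hν : ν ≤ 0 := hx ▸ h2
      have hz : ν * (ν - 2*m) = 0 := by nlinarith
      rcases mul_eq_zero.mp hz with h' | h'
      · exact h'
      · nlinarith
  · push_neg at hm hmk
    rw [show max (m - k) 0 = m - k from max_eq_left (by linarith)] at h
    rcases hmax with hx | hx <;> rw [hx] at h
    · have hz : (ν - (m - k))^2 = 0 := by nlinarith
      have := pow_eq_zero_iff (n := 2) (by norm_num) |>.mp hz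
      linarith
    · have hν : ν ≤ 0 := hx ▸ h2
      nlinarith [sq_nonneg (ν - m)]

/-- The dual minimization of the constrained control problem: with `γ < 0`, `σ ≠ 0`,
`θ = (b-r)/σ`, `ρ = (1-γ)/γ`, the function
`F(ν) = -((1+ρ)/2)(θ + ν/σ)² + δ(ν)` (which equals `(1/(2|γ|))(θ + ν/σ)² + δ(ν)`)
has a unique global minimizer `ν*` over `ℝ`, given piecewise, and
`(r - b - ν*)/(σ²|γ|) = min(1, max(0, (r-b)/(σ²|γ|)))`. -/
theorem stmt_5 (γ σ r b : ℝ) (hγ : γ < 0) (hσ : σ ≠ 0) :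
    let θ := (b - r) / σ
    let ρ := (1 - γ) / γ
    let F : ℝ → ℝ := fun ν => -((1 + ρ) / 2) * (θ + ν / σ) ^ 2 + max ν 0
    let νstar : ℝ := if r - b ≤ 0 then r - b
      else if r - b ≤ σ ^ 2 * |γ| then 0 else r - b - σ ^ 2 * |γ|
    (∀ ν : ℝ, F ν = 1 / (2 * |γ|) * (θ + ν / σ) ^ 2 + max ν 0) ∧
    (∀ ν : ℝ, F νstar ≤ F ν) ∧
    (∀ ν : ℝ, F ν = F νstar → ν = νstar) ∧
    (r - b - νstar) / (σ ^ 2 * |γ|) = min 1 (max 0 ((r - b) / (σ ^ 2 * |γ|))) := by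
  intro θ ρ F νstar
  have hγ' : γ ≠ 0 := ne_of_lt hγ
  have habs : |γ| = -γ := abs_of_neg hγ
  set m : ℝ := r - b with hm
  set k : ℝ := σ ^ 2 * |γ| with hkdef
  have hk : 0 < k := by
    have : 0 < |γ| := abs_pos.mpr hγ'
    positivity
  have hk' : (2 : ℝ) * k ≠ 0 := by positivity
  have hF : ∀ ν : ℝ, F ν = ((ν - m)^2 + 2*k*max ν 0) / (2*k) := by
    intro ν
    show -((1 + ρ) / 2) * (θ + ν / σ) ^ 2 + max ν 0 = _
    unfold θ ρ
    rw [hkdef, habs, hm]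
    field_simp
    ring
  have hstar : νstar = if m ≤ 0 then m else if m ≤ k then 0 else m - k := rfl
  refine ⟨?_, ?_, ?_, ?_⟩
  · intro ν
    show -((1 + ρ) / 2) * (θ + ν / σ) ^ 2 + max ν 0 = _
    unfold ρ
    rw [habs]
    field_simp
    ring
  · intro ν
    rw [hF, hF, div_le_div_iff_of_pos_right (by positivity : (0:ℝ) < 2*k)]
    exact hstar ▸ aux_min m k hk ν
  · intro ν h
    rw [hF, hF] at h
    have h' : (ν - m)^2 + 2*k*max ν 0 = (νstar - m)^2 + 2*k*max νstar 0 := by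
      field_simp at h; linarith
    exact hstar ▸ aux_uniq m k hk ν (hstar ▸ h')
  · rw [hstar]
    rcases le_or_gt m 0 with h1 | h1
    · rw [if_pos h1]
      have : m / k ≤ 0 := div_nonpos_iff.mpr (Or.inr ⟨h1, hk.le⟩)
      rw [max_eq_left this, min_eq_right (by norm_num : (0:ℝ) ≤ 1)]
      simp
    · rw [if_neg (not_le.mpr h1)]
      rcases le_or_gt m k with h2 | h2
      · rw [if_pos h2]
        have hd : m / k ≤ 1 := (div_le_one hk).mpr h2
        have hd0 : 0 ≤ m / k := le_of_lt (div_pos h1 hk)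
        rw [max_eq_right hd0, min_eq_right hd]
        ring
      · rw [if_neg (not_le.mpr h2)]
        have hd : 1 ≤ m / k := (one_le_div hk).mpr (le_of_lt h2)
        rw [max_eq_right (by linarith), min_eq_left hd]
        field_simp
        ring
end

section
/- Define A₁(τ) = b₁ · 2(1 − e^{−θτ}) / (2θ − (b₂ + θ)(1 − e^{−θτ})). Then A₁(0) = 0, and on any interval [0, T] on which the denominator 2θ − (b₂ + θ)(1 − e^{−θτ}) does not vanish, A₁ is differentiable and satisfies the Riccati equation A₁′(τ) = b₃ A₁(τ)² + b₂ A₁(τ) + b₁. -/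
/-- `A₁(τ) = b₁·2(1 - e^{-θτ})/(2θ - (b₂+θ)(1 - e^{-θτ}))` satisfies `A₁(0) = 0` and, on
any interval `[0,T]` where the denominator does not vanish, the Riccati equation
`A₁' = b₃A₁² + b₂A₁ + b₁`. -/
theorem stmt_6 (γ σx lamx : ℝ) (hγ : γ < 0)
    (hdisc : (2 * ((γ - 1) / γ * σx - lamx)) ^ 2
        - 4 * ((1 - γ) / γ) * (σx ^ 2 / γ) > 0) :
    let b₁ := (1 - γ) / γ
    let b₂ := 2 * ((γ - 1) / γ * σx - lamx)
    let b₃ := σx ^ 2 / γ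
    let θ := Real.sqrt (b₂ ^ 2 - 4 * b₁ * b₃)
    let A₁ : ℝ → ℝ := fun τ =>
      b₁ * (2 * (1 - Real.exp (-θ * τ))) /
        (2 * θ - (b₂ + θ) * (1 - Real.exp (-θ * τ)))
    A₁ 0 = 0 ∧
    ∀ T > (0:ℝ),
      (∀ τ ∈ Set.Icc (0:ℝ) T, 2 * θ - (b₂ + θ) * (1 - Real.exp (-θ * τ)) ≠ 0) →
      ∀ τ ∈ Set.Icc (0:ℝ) T,
        HasDerivAt A₁ (b₃ * A₁ τ ^ 2 + b₂ * A₁ τ + b₁) τ := by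
  intro b₁ b₂ b₃ θ A₁
  have hθ2 : θ ^ 2 = b₂ ^ 2 - 4 * b₁ * b₃ := Real.sq_sqrt (le_of_lt hdisc)
  constructor
  · simp [A₁]
  · intro T hT hden τ hτ
    have hd : 2 * θ - (b₂ + θ) * (1 - Real.exp (-θ * τ)) ≠ 0 := hden τ hτ
    have h1 : HasDerivAt (fun t : ℝ => -θ * t) (-θ) τ := by
      simpa using (hasDerivAt_id τ).const_mul (-θ)
    have hexp : HasDerivAt (fun t : ℝ => Real.exp (-θ * t))
        (Real.exp (-θ * τ) * -θ) τ := h1.exp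
    have hnum : HasDerivAt (fun t : ℝ => b₁ * (2 * (1 - Real.exp (-θ * t))))
        (b₁ * (2 * (0 - Real.exp (-θ * τ) * -θ))) τ :=
      (((hasDerivAt_const τ (1:ℝ)).sub hexp).const_mul 2).const_mul b₁
    have hdenD : HasDerivAt (fun t : ℝ => 2 * θ - (b₂ + θ) * (1 - Real.exp (-θ * t)))
        (0 - (b₂ + θ) * (0 - Real.exp (-θ * τ) * -θ)) τ :=
      (hasDerivAt_const τ (2 * θ)).sub
        (((hasDerivAt_const τ (1:ℝ)).sub hexp).const_mul (b₂ + θ))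
    have hA : HasDerivAt A₁ _ τ := hnum.div hdenD hd
    convert hA using 1
    simp only [A₁]
    clear_value b₁ b₂ b₃ θ
    set E := Real.exp (-θ * τ) with hE
    set D := 2 * θ - (b₂ + θ) * (1 - E) with hD
    have e1 : b₃ * (b₁ * (2 * (1 - E)) / D) ^ 2 + b₂ * (b₁ * (2 * (1 - E)) / D) + b₁
        = (b₃ * (b₁ * (2 * (1 - E))) ^ 2 + b₂ * (b₁ * (2 * (1 - E))) * D + b₁ * D ^ 2) / D ^ 2 := by
      field_simp
    rw [e1]
    congr 1
    linear_combination (b₁ * (1 - E) ^ 2) * hθ2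
end

section
/- Define A₁(τ) = b₁ · 2(1 − e^{−θτ}) / (2θ − (b₂ + θ)(1 − e^{−θτ})) and A₂(τ) = 4λ_x X̄ b₁ (1 − e^{−θτ/2})² / (θ(2θ − (θ + b₂)(1 − e^{−θτ}))). Then A₂(0) = 0, and on any interval [0, T] on which the denominator 2θ − (b₂ + θ)(1 − e^{−θτ}) does not vanish, A₂ is differentiable and satisfies the linear equation A₂′(τ) = (b₃ A₁(τ) + b₂/2) A₂(τ) + λ_x X̄ A₁(τ). -/
set_option maxHeartbeats 1000000


/-- `A₂(τ) = 4λₓX̄b₁(1 - e^{-θτ/2})²/(θ(2θ - (θ+b₂)(1 - e^{-θτ})))` satisfies `A₂(0) = 0`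
and, on any interval `[0,T]` where the denominator does not vanish, the linear equation
`A₂' = (b₃A₁ + b₂/2)A₂ + λₓX̄A₁`. -/
theorem stmt_7 (γ σx lamx Xbar : ℝ) (hγ : γ < 0)
    (hdisc : (2 * ((γ - 1) / γ * σx - lamx)) ^ 2
        - 4 * ((1 - γ) / γ) * (σx ^ 2 / γ) > 0) :
    let b₁ := (1 - γ) / γ
    let b₂ := 2 * ((γ - 1) / γ * σx - lamx)
    let b₃ := σx ^ 2 / γ
    let θ := Real.sqrt (b₂ ^ 2 - 4 * b₁ * b₃)
    let A₁ : ℝ → ℝ := fun τ =>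
      b₁ * (2 * (1 - Real.exp (-θ * τ))) /
        (2 * θ - (b₂ + θ) * (1 - Real.exp (-θ * τ)))
    let A₂ : ℝ → ℝ := fun τ =>
      4 * lamx * Xbar * b₁ * (1 - Real.exp (-θ * τ / 2)) ^ 2 /
        (θ * (2 * θ - (θ + b₂) * (1 - Real.exp (-θ * τ))))
    A₂ 0 = 0 ∧
    ∀ T > (0:ℝ),
      (∀ τ ∈ Set.Icc (0:ℝ) T, 2 * θ - (b₂ + θ) * (1 - Real.exp (-θ * τ)) ≠ 0) →
      ∀ τ ∈ Set.Icc (0:ℝ) T,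
        HasDerivAt A₂ ((b₃ * A₁ τ + b₂ / 2) * A₂ τ + lamx * Xbar * A₁ τ) τ := by
  intro b₁ b₂ b₃ θ A₁ A₂
  have hb₁ : b₁ ≠ 0 := by
    show (1 - γ) / γ ≠ 0
    exact div_ne_zero (ne_of_gt (by linarith)) (ne_of_lt hγ)
  have hθpos : 0 < θ := Real.sqrt_pos.mpr hdisc
  have hθsq : θ ^ 2 = b₂ ^ 2 - 4 * b₁ * b₃ := Real.sq_sqrt hdisc.le
  constructor
  · show 4 * lamx * Xbar * b₁ * (1 - Real.exp (-θ * 0 / 2)) ^ 2 / _ = 0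
    norm_num
  · intro T hT hDen τ hτ
    have hD : 2 * θ - (b₂ + θ) * (1 - Real.exp (-θ * τ)) ≠ 0 := hDen τ hτ
    have hD' : 2 * θ - (θ + b₂) * (1 - Real.exp (-θ * τ)) ≠ 0 := by
      rwa [add_comm b₂ θ] at hD
    have hθD : θ * (2 * θ - (θ + b₂) * (1 - Real.exp (-θ * τ))) ≠ 0 :=
      mul_ne_zero hθpos.ne' hD'
    -- derivative of exp(-θ τ / 2)
    have hlin : HasDerivAt (fun t : ℝ => -θ * t / 2) (-θ / 2) τ := by
      simpa using ((hasDerivAt_id τ).const_mul (-θ)).div_const 2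
    have hx : HasDerivAt (fun t : ℝ => Real.exp (-θ * t / 2))
        (Real.exp (-θ * τ / 2) * (-θ / 2)) τ := hlin.exp
    have hE : HasDerivAt (fun t : ℝ => Real.exp (-θ * t))
        (Real.exp (-θ * τ) * (-θ)) τ := by
      simpa using ((hasDerivAt_id τ).const_mul (-θ)).exp
    -- numerator
    have hNum : HasDerivAt (fun t : ℝ => 4 * lamx * Xbar * b₁ *
        (1 - Real.exp (-θ * t / 2)) ^ 2)
        (4 * lamx * Xbar * b₁ * (2 * (1 - Real.exp (-θ * τ / 2)) ^ 1 *
          (0 - Real.exp (-θ * τ / 2) * (-θ / 2)))) τ := by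
      exact (((hasDerivAt_const τ (1:ℝ)).sub hx).pow 2).const_mul _
    -- denominator
    have hDenD : HasDerivAt (fun t : ℝ => θ * (2 * θ -
        (θ + b₂) * (1 - Real.exp (-θ * t))))
        (θ * (0 - (θ + b₂) * (0 - Real.exp (-θ * τ) * (-θ)))) τ := by
      exact ((hasDerivAt_const τ (2*θ)).sub
        (((hasDerivAt_const τ (1:ℝ)).sub hE).const_mul (θ + b₂))).const_mul θ
    have hq := hNum.div hDenD hθD
    refine hq.congr_deriv ?_
    symm
    simp only [A₁, A₂]
    clear_value θ
    clear_value b₃ b₂ b₁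
    have hsq : Real.exp (-θ * τ) = Real.exp (-θ * τ / 2) ^ 2 := by
      rw [sq, ← Real.exp_add]; ring_nf
    rw [hsq] at hD' hθD ⊢
    set x := Real.exp (-θ * τ / 2) with hxdef
    have hD2 : -b₂ + b₂ * x ^ 2 + θ + θ * x ^ 2 ≠ 0 := by
      intro h; apply hD'; linear_combination h
    have hb₃ : b₃ = (b₂ ^ 2 - θ ^ 2) / (4 * b₁) := by
      rw [eq_div_iff (mul_ne_zero four_ne_zero hb₁)]
      linear_combination hθsq
    rw [hb₃]
    have hDc : 2 * θ - (b₂ + θ) * (1 - x ^ 2) ≠ 0 := by rwa [add_comm b₂ θ]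
    rw [add_comm b₂ θ]
    have hD4 : θ * 2 - (1 - x ^ 2) * (θ + b₂) ≠ 0 := by
      intro h; apply hD'; linear_combination h
    field_simp [hθpos.ne', hb₁, hD', hDc, hD4]
    ring
end

section
/- Fix γ < 0, real parameters σ_x, λ_x, X̄, μ, and T > 0. Suppose A₁, A₂, A₃ : [0, T] → ℝ are differentiable with A₁(0) = A₂(0) = A₃(0) = 0 and satisfy A₁′ = (σ_x²/γ)A₁² + 2(((γ−1)/γ)σ_x − λ_x)A₁ + (1−γ)/γ, A₂′ = (σ_x²/γ)A₁A₂ + (((γ−1)/γ)σ_x − λ_x)A₂ + λ_x X̄ A₁, and A₃′ = (σ_x²/2)(A₁ + A₂²/γ) + λ_x X̄ A₂ − μ(1−γ). Then the function H(x, t) = exp((1/γ)((A₁(T−t)/2)x² + A₂(T−t)x + A₃(T−t))) satisfies, for all x ∈ ℝ and t ∈ (0, T), the PDE ∂H/∂t + (σ_x²/2)∂²H/∂x² + ((((γ−1)/γ)σ_x − λ_x)x + λ_x X̄)∂H/∂x + (x²·(1/(2γ))(1/γ − 1) + μ(1 − 1/γ))H = 0, together with the terminal condition H(x, T) = 1 for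 all x ∈ ℝ. -/
set_option maxHeartbeats 1600000

/-- If `A₁, A₂, A₃` vanish at `0` and satisfy the given Riccati/linear/quadrature ODEs on
`[0,T]`, then `H(x,t) = exp((1/γ)((A₁(T-t)/2)x² + A₂(T-t)x + A₃(T-t)))` solves the PDE
`∂H/∂t + (σₓ²/2)∂²H/∂x² + ((((γ-1)/γ)σₓ - λₓ)x + λₓX̄)∂H/∂x
  + (x²(1/(2γ))(1/γ - 1) + μ(1 - 1/γ))H = 0` on `ℝ × (0,T)`, with `H(x,T) = 1`. -/
theorem stmt_8 (γ σx lamx Xbar μ T : ℝ) (hγ : γ < 0) (hT : 0 < T)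
    (A₁ A₂ A₃ : ℝ → ℝ)
    (hA₁0 : A₁ 0 = 0) (hA₂0 : A₂ 0 = 0) (hA₃0 : A₃ 0 = 0)
    (hA₁ : ∀ τ ∈ Set.Icc (0:ℝ) T,
      HasDerivAt A₁
        (σx ^ 2 / γ * A₁ τ ^ 2 + 2 * ((γ - 1) / γ * σx - lamx) * A₁ τ + (1 - γ) / γ) τ)
    (hA₂ : ∀ τ ∈ Set.Icc (0:ℝ) T,
      HasDerivAt A₂
        (σx ^ 2 / γ * A₁ τ * A₂ τ + ((γ - 1) / γ * σx - lamx) * A₂ τ + lamx * Xbar * A₁ τ) τ)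
    (hA₃ : ∀ τ ∈ Set.Icc (0:ℝ) T,
      HasDerivAt A₃
        (σx ^ 2 / 2 * (A₁ τ + A₂ τ ^ 2 / γ) + lamx * Xbar * A₂ τ - μ * (1 - γ)) τ) :
    let H : ℝ → ℝ → ℝ := fun x t =>
      Real.exp (1 / γ * (A₁ (T - t) / 2 * x ^ 2 + A₂ (T - t) * x + A₃ (T - t)))
    (∀ x : ℝ, ∀ t ∈ Set.Ioo (0:ℝ) T,
      deriv (fun s => H x s) t
        + σx ^ 2 / 2 * deriv (deriv (fun y => H y t)) x
        + (((γ - 1) / γ * σx - lamx) * x + lamx * Xbar) * deriv (fun y => H y t) x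
        + (x ^ 2 * (1 / (2 * γ) * (1 / γ - 1)) + μ * (1 - 1 / γ)) * H x t = 0) ∧
    (∀ x : ℝ, H x T = 1) := by
  have hγ0 : γ ≠ 0 := ne_of_lt hγ
  intro H
  constructor
  · intro x t ht
    simp only [H]
    have hmem : T - t ∈ Set.Icc (0:ℝ) T := ⟨by linarith [ht.2], by linarith [ht.1]⟩
    set a := A₁ (T - t) with ha
    set b := A₂ (T - t) with hb
    set c := A₃ (T - t) with hc
    have ha1 := hA₁ (T - t) hmem
    have ha2 := hA₂ (T - t) hmem
    have ha3 := hA₃ (T - t) hmem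
    set a' := σx ^ 2 / γ * a ^ 2 + 2 * ((γ - 1) / γ * σx - lamx) * a + (1 - γ) / γ with ha'
    set b' := σx ^ 2 / γ * a * b + ((γ - 1) / γ * σx - lamx) * b + lamx * Xbar * a with hb'
    set c' := σx ^ 2 / 2 * (a + b ^ 2 / γ) + lamx * Xbar * b - μ * (1 - γ) with hc'
    set E : ℝ → ℝ := fun y => Real.exp (1 / γ * (a / 2 * y ^ 2 + b * y + c)) with hE
    -- spatial first derivative, at any point y
    have hx1 : ∀ y : ℝ, HasDerivAt (fun z => E z) (1 / γ * (a * y + b) * E y) y := by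
      intro y
      have hp : HasDerivAt (fun z : ℝ => 1 / γ * (a / 2 * z ^ 2 + b * z + c))
          (1 / γ * (a * y + b)) y := by
        have h2 := ((((hasDerivAt_pow 2 y).const_mul (a / 2)).add
          ((hasDerivAt_id y).const_mul b)).add_const c).const_mul (1 / γ)
        exact h2.congr_deriv (by ring)
      simpa [hE, mul_comm] using hp.exp
    have hd1 : deriv (fun y => E y) = fun y => 1 / γ * (a * y + b) * E y := by
      funext y; exact (hx1 y).deriv
    -- second spatial derivative at x
    have hlin : HasDerivAt (fun y : ℝ => 1 / γ * (a * y + b)) (1 / γ * a) x := by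
      have h2 := (((hasDerivAt_id x).const_mul a).add_const b).const_mul (1 / γ)
      exact h2.congr_deriv (by ring)
    have hx2 : HasDerivAt (fun y => 1 / γ * (a * y + b) * E y)
        (1 / γ * a * E x + 1 / γ * (a * x + b) * (1 / γ * (a * x + b) * E x)) x :=
      hlin.mul (hx1 x)
    -- time derivative
    have h1t : HasDerivAt (fun s => A₁ (T - s)) (-a') t := by
      exact (ha1.comp t ((hasDerivAt_id t).const_sub T)).congr_deriv (by ring)
    have h2t : HasDerivAt (fun s => A₂ (T - s)) (-b') t := by
      exact (ha2.comp t ((hasDerivAt_id t).const_sub T)).congr_deriv (by ring)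
    have h3t : HasDerivAt (fun s => A₃ (T - s)) (-c') t := by
      exact (ha3.comp t ((hasDerivAt_id t).const_sub T)).congr_deriv (by ring)
    have hin : HasDerivAt
        (fun s : ℝ => 1 / γ * (A₁ (T - s) / 2 * x ^ 2 + A₂ (T - s) * x + A₃ (T - s)))
        (1 / γ * (-a' / 2 * x ^ 2 + -b' * x + -c')) t := by
      have h2 := ((((h1t.div_const 2).mul_const (x ^ 2)).add (h2t.mul_const x)).add
        h3t).const_mul (1 / γ)
      exact h2
    have hHt : HasDerivAt
        (fun s : ℝ => Real.exp
          (1 / γ * (A₁ (T - s) / 2 * x ^ 2 + A₂ (T - s) * x + A₃ (T - s))))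
        (1 / γ * (-a' / 2 * x ^ 2 + -b' * x + -c') * E x) t := by
      simpa [hE, mul_comm] using hin.exp
    have hEE : Real.exp (1 / γ * (a / 2 * x ^ 2 + b * x + c)) = E x := rfl
    rw [hHt.deriv, hEE]
    simp only [hd1, hx2.deriv]
    have hEx : E x ≠ 0 := Real.exp_ne_zero _
    simp only [ha', hb', hc']
    field_simp
    ring
  · intro x
    simp [H, hA₁0, hA₂0, hA₃0]
end

section
/- Fix γ < 0, real parameters θ, μ, β, σ_S with σ_S ≠ 0, T > 0, and an integer i ≥ 1. Let g_i : [0, T] → ℝ be continuous and let g : [0, T] → ℝ be differentiable and satisfy g′(t) + ((θ²/2)(2^i/γ)(2^i/γ − 1) + μ(1 − 2^i/γ)) g(t) = (β² 2^{i−1}/(2σ_S²γ)) g_i(t)² for all t ∈ (0, T). Define f_i(z, s, t) = z^{2^{i−1}/γ} s^{2^{i−1}−1} g_i(t) and f_{i+1}(z, s, t) = z^{2^i/γ} s^{2^i−1} g(t). Then for all z > 0, s > 0, and t ∈ (0, T), ∂f_{i+1}/∂t + (1/2)z²θ² ∂²f_{i+1}/∂z² − μ z ∂f_{i+1}/∂z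 + μ f_{i+1} = (β²/(2σ_S²)) z s f_i ∂f_i/∂z, that is, (∂/∂t + L₁)f_{i+1} = −L₂ f_i. -/
lemma aux_hasDeriv (e c x : ℝ) (hx : 0 < x) :
    HasDerivAt (fun w : ℝ => w ^ e * c) (e * x ^ (e - 1) * c) x :=
  (Real.hasDerivAt_rpow_const (Or.inl hx.ne')).mul_const c

/-- If `g` solves `g' + ((θ²/2)(2ⁱ/γ)(2ⁱ/γ - 1) + μ(1 - 2ⁱ/γ))g = (β²2^{i-1}/(2σ_S²γ))gᵢ²`
on `(0,T)`, then `f_{i+1}(z,s,t) = z^{2ⁱ/γ}s^{2ⁱ-1}g(t)` satisfies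
`(∂/∂t + L₁)f_{i+1} = -L₂fᵢ` with `fᵢ(z,s,t) = z^{2^{i-1}/γ}s^{2^{i-1}-1}gᵢ(t)`. -/
theorem stmt_10 (γ θ μ β σS T : ℝ) (hγ : γ < 0) (hσS : σS ≠ 0) (hT : 0 < T)
    (i : ℕ) (hi : 1 ≤ i) (gi g : ℝ → ℝ) (hgi : Continuous gi)
    (hgdiff : ∀ t ∈ Set.Ioo (0:ℝ) T, DifferentiableAt ℝ g t)
    (hode : ∀ t ∈ Set.Ioo (0:ℝ) T,
      deriv g t
        + (θ ^ 2 / 2 * ((2:ℝ) ^ i / γ) * ((2:ℝ) ^ i / γ - 1)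
            + μ * (1 - (2:ℝ) ^ i / γ)) * g t
        = β ^ 2 * (2:ℝ) ^ (i - 1) / (2 * σS ^ 2 * γ) * gi t ^ 2) :
    let fi : ℝ → ℝ → ℝ → ℝ := fun z s t =>
      z ^ ((2:ℝ) ^ (i - 1) / γ) * s ^ ((2:ℝ) ^ (i - 1) - 1) * gi t
    let fip : ℝ → ℝ → ℝ → ℝ := fun z s t =>
      z ^ ((2:ℝ) ^ i / γ) * s ^ ((2:ℝ) ^ i - 1) * g t
    ∀ z > (0:ℝ), ∀ s > (0:ℝ), ∀ t ∈ Set.Ioo (0:ℝ) T,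
      deriv (fun u => fip z s u) t
        + 1 / 2 * z ^ 2 * θ ^ 2 * deriv (deriv (fun w => fip w s t)) z
        - μ * z * deriv (fun w => fip w s t) z
        + μ * fip z s t
      = β ^ 2 / (2 * σS ^ 2) * z * s * fi z s t * deriv (fun w => fi w s t) z := by
  intro fi fip z hz s hs t ht
  obtain ⟨j, rfl⟩ : ∃ j, i = j + 1 := ⟨i - 1, (Nat.succ_pred_eq_of_pos hi).symm⟩
  have hode' := hode t ht
  simp only [Nat.add_sub_cancel] at hode'
  simp only [fi, fip, Nat.add_sub_cancel]
  set p : ℝ := (2:ℝ) ^ (j + 1) / γ with hpdef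
  set a : ℝ := (2:ℝ) ^ j / γ with hadef
  set q : ℝ := (2:ℝ) ^ (j + 1) - 1 with hqdef
  set q' : ℝ := (2:ℝ) ^ j - 1 with hq'def
  have hzne : z ≠ 0 := ne_of_gt hz
  have hsne : s ≠ 0 := ne_of_gt hs
  have hγne : γ ≠ 0 := ne_of_lt hγ
  -- time derivative
  have hDt : deriv (fun u => z ^ p * s ^ q * g u) t = z ^ p * s ^ q * deriv g t := by
    simp only [mul_assoc]
    rw [deriv_const_mul _ ((hgdiff t ht).const_mul _)]
    rw [deriv_const_mul _ (hgdiff t ht)]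
  -- first z derivative of fip
  have hD1 : deriv (fun w => w ^ p * s ^ q * g t) z = p * z ^ (p - 1) * (s ^ q * g t) := by
    simp only [mul_assoc]
    exact (aux_hasDeriv p (s ^ q * g t) z hz).deriv.trans (by ring)
  -- second z derivative of fip
  have hD2 : deriv (deriv (fun w => w ^ p * s ^ q * g t)) z
      = p * ((p - 1) * z ^ (p - 2) * (s ^ q * g t)) := by
    have hev : deriv (fun w => w ^ p * s ^ q * g t)
        =ᶠ[nhds z] fun w => p * (w ^ (p - 1) * (s ^ q * g t)) := by
      filter_upwards [eventually_gt_nhds hz] with w hw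
      simp only [mul_assoc]
      rw [(aux_hasDeriv p (s ^ q * g t) w hw).deriv]
      ring
    rw [hev.deriv_eq]
    have := ((aux_hasDeriv (p - 1) (s ^ q * g t) z hz).const_mul p).deriv
    convert this using 2
    ring_nf
  -- z derivative of fi
  have hD3 : deriv (fun w => w ^ a * s ^ q' * gi t) z = a * z ^ (a - 1) * (s ^ q' * gi t) := by
    simp only [mul_assoc]
    exact (aux_hasDeriv a (s ^ q' * gi t) z hz).deriv.trans (by ring)
  rw [hDt, hD1, hD2, hD3]
  -- rpow identities
  have hzp : z ^ p = z ^ a * z ^ a := by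
    rw [← Real.rpow_add hz]
    congr 1
    rw [hpdef, hadef, pow_succ]; ring
  have hzp1 : z ^ (p - 1) = z ^ p / z := by
    rw [Real.rpow_sub hz, Real.rpow_one]
  have hzp2 : z ^ (p - 2) = z ^ p / z ^ 2 := by
    rw [Real.rpow_sub hz, Real.rpow_two]
  have hza1 : z ^ (a - 1) = z ^ a / z := by
    rw [Real.rpow_sub hz, Real.rpow_one]
  have hsq : s ^ q = s ^ q' * s ^ q' * s := by
    have hq2 : q = q' + q' + 1 := by rw [hqdef, hq'def, pow_succ]; ring
    rw [hq2, Real.rpow_add hs, Real.rpow_add hs, Real.rpow_one]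
  rw [hzp1, hzp2, hza1, hsq, hzp]
  have hode'' : deriv g t =
      β ^ 2 * (2:ℝ) ^ j / (2 * σS ^ 2 * γ) * gi t ^ 2
        - (θ ^ 2 / 2 * p * (p - 1) + μ * (1 - p)) * g t := by
    linarith [hode']
  rw [hode'']
  have hp2a : p = 2 * a := by rw [hpdef, hadef, pow_succ]; ring
  rw [hp2a, hadef]
  field_simp
  ring
end

section
/- Fix γ < 0, real parameters θ, μ, β, σ_S with σ_S ≠ 0, and T > 0, and assume D := θ²(a_{1,1} − a_{2,1}) + 2(a_{1,2} − a_{2,2}) ≠ 0. Then (i) D = γμ − θ²/γ, and (ii) the function g₂(t) = (β²/(2σ_S²)) (h₂(T−t) − h₁(T−t)²)/D satisfies g₂(T) = 0 and g₂′(t) + r₁ g₂(t) = (β²/(2σ_S²γ)) h₁(T−t)² for all t, where r₁ = (2/γ)((θ²/2)a_{2,1} + a_{2,2}). -/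
/-- Assume `D = θ²(a₁₁ - a₂₁) + 2(a₁₂ - a₂₂) ≠ 0`. Then (i) `D = γμ - θ²/γ`, and (ii)
`g₂(t) = (β²/(2σ_S²))(h₂(T-t) - h₁(T-t)²)/D` satisfies `g₂(T) = 0` and
`g₂'(t) + r₁g₂(t) = (β²/(2σ_S²γ))h₁(T-t)²` for all `t`, where
`r₁ = (2/γ)((θ²/2)a₂₁ + a₂₂)`. -/
theorem stmt_12 (γ θ μ β σS T : ℝ) (hγ : γ < 0) (hσS : σS ≠ 0) (hT : 0 < T) :
    let a11 := 1 / γ - 1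
    let a12 := (γ - 1) * μ
    let a21 := 2 / γ - 1
    let a22 := (γ / 2 - 1) * μ
    let h₁ : ℝ → ℝ := fun τ => Real.exp (1 / γ * (a11 / 2 * θ ^ 2 + a12) * τ)
    let h₂ : ℝ → ℝ := fun τ => Real.exp (2 / γ * (a21 / 2 * θ ^ 2 + a22) * τ)
    let D := θ ^ 2 * (a11 - a21) + 2 * (a12 - a22)
    let r₁ := 2 / γ * (θ ^ 2 / 2 * a21 + a22)
    let g₂ : ℝ → ℝ := fun t => β ^ 2 / (2 * σS ^ 2) * (h₂ (T - t) - h₁ (T - t) ^ 2) / D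
    D ≠ 0 →
      D = γ * μ - θ ^ 2 / γ ∧
      g₂ T = 0 ∧
      ∀ t : ℝ,
        HasDerivAt g₂ (β ^ 2 / (2 * σS ^ 2 * γ) * h₁ (T - t) ^ 2 - r₁ * g₂ t) t := by
  intro a11 a12 a21 a22 h₁ h₂ D r₁ g₂ hD
  have hγ0 : γ ≠ 0 := ne_of_lt hγ
  refine ⟨?_, ?_, ?_⟩
  · show θ ^ 2 * (a11 - a21) + 2 * (a12 - a22) = γ * μ - θ ^ 2 / γ
    simp only [a11, a12, a21, a22]
    field_simp
    ring
  · show β ^ 2 / (2 * σS ^ 2) * (h₂ (T - T) - h₁ (T - T) ^ 2) / D = 0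
    simp [h₁, h₂]
  · intro t
    set c₁ : ℝ := 1 / γ * (a11 / 2 * θ ^ 2 + a12) with hc₁
    set c₂ : ℝ := 2 / γ * (a21 / 2 * θ ^ 2 + a22) with hc₂
    have hd : ∀ c : ℝ, HasDerivAt (fun s : ℝ => Real.exp (c * (T - s)))
        (-c * Real.exp (c * (T - t))) t := by
      intro c
      have h1 : HasDerivAt (fun s : ℝ => c * (T - s)) (-c) t := by
        have := ((hasDerivAt_id t).const_sub T).const_mul c
        simpa using this
      simpa [mul_comm, Function.comp_def] using (Real.hasDerivAt_exp (c * (T - t))).comp t h1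
    have hE1 : HasDerivAt (fun s => h₁ (T - s)) (-c₁ * h₁ (T - t)) t := hd c₁
    have hE2 : HasDerivAt (fun s => h₂ (T - s)) (-c₂ * h₂ (T - t)) t := hd c₂
    have hE1sq : HasDerivAt (fun s => h₁ (T - s) ^ 2)
        (2 * h₁ (T - t) * (-c₁ * h₁ (T - t))) t := by
      simpa [Pi.pow_def] using hE1.pow 2
    have hmain : HasDerivAt g₂
        ((β ^ 2 / (2 * σS ^ 2)) * (-c₂ * h₂ (T - t) - 2 * h₁ (T - t) * (-c₁ * h₁ (T - t))) / D)
        t := ((hE2.sub hE1sq).const_mul (β ^ 2 / (2 * σS ^ 2))).div_const D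
    convert hmain using 1
    have key : 2 * c₁ - c₂ = D / γ := by
      simp only [hc₁, hc₂, a11, a12, a21, a22]
      show _ = (θ ^ 2 * (a11 - a21) + 2 * (a12 - a22)) / γ
      simp only [a11, a12, a21, a22]
      field_simp
      ring
    have hr₁ : r₁ = c₂ := by
      show 2 / γ * (θ ^ 2 / 2 * a21 + a22) = c₂
      rw [hc₂]; ring
    have hinv : β ^ 2 / (2 * σS ^ 2 * γ) = β ^ 2 / (2 * σS ^ 2) * ((2 * c₁ - c₂) / D) := by
      rw [key]
      field_simp
    rw [hr₁, hinv]
    simp only [g₂]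
    field_simp
    ring
end

section
/- Fix γ < 0 and real parameters θ, μ. For every τ > 0, the quantity h₂(τ) − h₁(τ)² is positive, zero, or negative exactly when γμ − θ²/γ is positive, zero, or negative, respectively. Consequently, if additionally β ≠ 0, σ_S ≠ 0, and γμ − θ²/γ ≠ 0, then g₂(t) = (β²/(2σ_S²)) (h₂(T−t) − h₁(T−t)²)/(γμ − θ²/γ) is strictly positive for every t < T and vanishes at t = T. -/
/-- For every `τ > 0`, `h₂(τ) - h₁(τ)²` is positive, zero, or negative exactly when
`γμ - θ²/γ` is, respectively. Consequently, if `β ≠ 0`, `σ_S ≠ 0` and `γμ - θ²/γ ≠ 0`,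
then `g₂(t) = (β²/(2σ_S²))(h₂(T-t) - h₁(T-t)²)/(γμ - θ²/γ)` is strictly positive for
every `t < T` and vanishes at `t = T`. -/
theorem stmt_13 (γ θ μ : ℝ) (hγ : γ < 0) :
    let a11 := 1 / γ - 1
    let a12 := (γ - 1) * μ
    let a21 := 2 / γ - 1
    let a22 := (γ / 2 - 1) * μ
    let h₁ : ℝ → ℝ := fun τ => Real.exp (1 / γ * (a11 / 2 * θ ^ 2 + a12) * τ)
    let h₂ : ℝ → ℝ := fun τ => Real.exp (2 / γ * (a21 / 2 * θ ^ 2 + a22) * τ)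
    (∀ τ > (0:ℝ),
      (0 < h₂ τ - h₁ τ ^ 2 ↔ 0 < γ * μ - θ ^ 2 / γ) ∧
      (h₂ τ - h₁ τ ^ 2 = 0 ↔ γ * μ - θ ^ 2 / γ = 0) ∧
      (h₂ τ - h₁ τ ^ 2 < 0 ↔ γ * μ - θ ^ 2 / γ < 0)) ∧
    (∀ β σS T : ℝ, β ≠ 0 → σS ≠ 0 → γ * μ - θ ^ 2 / γ ≠ 0 →
      (∀ t < T,
        0 < β ^ 2 / (2 * σS ^ 2) * (h₂ (T - t) - h₁ (T - t) ^ 2) / (γ * μ - θ ^ 2 / γ)) ∧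
      β ^ 2 / (2 * σS ^ 2) * (h₂ (T - T) - h₁ (T - T) ^ 2) / (γ * μ - θ ^ 2 / γ) = 0) := by
  intro a11 a12 a21 a22 h₁ h₂
  have hγ' : γ ≠ 0 := ne_of_lt hγ
  set D : ℝ := θ ^ 2 / γ ^ 2 - μ with hD
  have hrel : γ * μ - θ ^ 2 / γ = (-γ) * D := by
    field_simp [hD]; rw [hD, mul_sub, mul_div_assoc', mul_div_cancel_left₀ _ (pow_ne_zero 2 hγ')]; ring
  have key : ∀ τ : ℝ, h₂ τ - h₁ τ ^ 2 =
      Real.exp (2 * (1 / γ * (a11 / 2 * θ ^ 2 + a12) * τ)) * (Real.exp (D * τ) - 1) := by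
    intro τ
    have e1 : h₁ τ ^ 2 = Real.exp (2 * (1 / γ * (a11 / 2 * θ ^ 2 + a12) * τ)) := by
      show Real.exp _ ^ 2 = _
      rw [two_mul, Real.exp_add, sq]
    have e2 : h₂ τ = Real.exp (2 * (1 / γ * (a11 / 2 * θ ^ 2 + a12) * τ)) *
        Real.exp (D * τ) := by
      show Real.exp _ = _
      rw [← Real.exp_add]
      congr 1
      show 2 / γ * (a21 / 2 * θ ^ 2 + a22) * τ = _
      simp only [a11, a12, a21, a22, hD]
      field_simp
      ring
    rw [e1, e2]; ring
  have hnegγ : (0:ℝ) < -γ := by linarith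
  have main : ∀ τ > (0:ℝ),
      (0 < h₂ τ - h₁ τ ^ 2 ↔ 0 < γ * μ - θ ^ 2 / γ) ∧
      (h₂ τ - h₁ τ ^ 2 = 0 ↔ γ * μ - θ ^ 2 / γ = 0) ∧
      (h₂ τ - h₁ τ ^ 2 < 0 ↔ γ * μ - θ ^ 2 / γ < 0) := by
    intro τ hτ
    have hE : (0:ℝ) < Real.exp (2 * (1 / γ * (a11 / 2 * θ ^ 2 + a12) * τ)) :=
      Real.exp_pos _
    have hEne : Real.exp (2 * (1 / γ * (a11 / 2 * θ ^ 2 + a12) * τ)) ≠ 0 := ne_of_gt hE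
    refine ⟨?_, ?_, ?_⟩
    · rw [key τ, hrel, mul_pos_iff_of_pos_left hE, sub_pos, Real.one_lt_exp_iff,
        mul_pos_iff_of_pos_right hτ, mul_pos_iff_of_pos_left hnegγ]
    · rw [key τ, hrel, mul_eq_zero]
      constructor
      · rintro (h | h)
        · exact absurd h hEne
        · have h0 : D * τ = 0 := by
            have h' := sub_eq_zero.1 h
            rw [← Real.exp_zero] at h'
            exact Real.exp_injective h'
          rcases mul_eq_zero.1 h0 with h' | h'
          · rw [h', mul_zero]
          · exact absurd h' (ne_of_gt hτ)
      · intro h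
        have hD0 : D = 0 := by
          rcases mul_eq_zero.1 h with h' | h'
          · exact absurd h' (ne_of_gt hnegγ)
          · exact h'
        right; rw [hD0, zero_mul, Real.exp_zero, sub_self]
    · rw [key τ, hrel]
      rw [mul_neg_iff]
      constructor
      · rintro (⟨_, h⟩ | ⟨h, _⟩)
        · have hDτ : D * τ < 0 := by
            by_contra hc
            push_neg at hc
            have := Real.one_le_exp hc
            linarith [sub_neg.1 h]
          have hDneg : D < 0 := by
            rcases lt_trichotomy D 0 with h' | h' | h'
            · exact h'
            · simp [h'] at hDτ
            · exact absurd (mul_pos h' hτ) (not_lt.2 hDτ.le)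
          exact mul_neg_of_pos_of_neg hnegγ hDneg
        · exact absurd hE (not_lt.2 h.le)
      · intro h
        have hDneg : D < 0 := by
          rcases lt_trichotomy D 0 with h' | h' | h'
          · exact h'
          · rw [h', mul_zero] at h; exact absurd h (lt_irrefl 0)
          · exact absurd (mul_pos hnegγ h') (not_lt.2 h.le)
        left
        exact ⟨hE, sub_neg.2 (Real.exp_lt_one_iff.2 (mul_neg_of_neg_of_pos hDneg hτ))⟩
  refine ⟨main, ?_⟩
  intro β σS T hβ hσ hd
  constructor
  · intro t ht
    have hτ : (0:ℝ) < T - t := by linarith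
    obtain ⟨m1, m2, m3⟩ := main (T - t) hτ
    have hcoef : 0 < β ^ 2 / (2 * σS ^ 2) := by positivity
    have hfrac : 0 < (h₂ (T - t) - h₁ (T - t) ^ 2) / (γ * μ - θ ^ 2 / γ) := by
      rcases hd.lt_or_gt with hlt | hgt
      · exact div_pos_of_neg_of_neg (m3.2 hlt) hlt
      · exact div_pos (m1.2 hgt) hgt
    calc 0 < β ^ 2 / (2 * σS ^ 2) *
        ((h₂ (T - t) - h₁ (T - t) ^ 2) / (γ * μ - θ ^ 2 / γ)) := mul_pos hcoef hfrac
      _ = _ := by ring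
  · have : h₂ (T - T) - h₁ (T - T) ^ 2 = 0 := by
      simp [h₁, h₂]
    rw [this]
    ring
end
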